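/- arXiv:2211.03851 — 2 statements merged into one kernel-verified Lean document; each statement's English description precedes it below -/
import Mathlib

section
/- For an edge sequence b : ℤ → {0,1} with shape γ, the partition γ contains a box with hook length exactly r if and only if there exists an index k with b(k) = 1 and b(k+r) = 0. -/
/-! Rows of `esShape b` correspond to the zeros `p` of `b` (counted from the top by the zeros
above them) and columns to the ones `q` (counted from the left by the ones at or below them);
row `p` has length `#{ones ≤ p}`, column `q` has length `#{zeros > q}`, and the box in row `p`
and column `q` exists iff `q < p`. Its hook length is `#{ones ≤ p} - #{ones ≤ q} + #{zeros > q} -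
#{zeros > p}`, which equals `p - q` because `#{ones ≤ j} - #{zeros > j} - j` does not depend
on `j`. -/

/-- An *edge sequence*: a predicate on `ℤ` (`True` = a `1`, `False` = a `0`),
eventually `1` in one direction and eventually `0` in the other. -/
def IsEdgeSeq (b : ℤ → Prop) : Prop :=
  (∃ N : ℤ, ∀ i : ℤ, N ≤ i → b i) ∧ (∃ N : ℤ, ∀ i : ℤ, i ≤ N → ¬ b i)

/-- The number of `0`'s of the edge sequence lying above position `j`. -/
noncomputable def numZerosAbove (b : ℤ → Prop) (j : ℤ) : ℕ :=
  Nat.card {i : ℤ // j < i ∧ ¬ b i}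

/-- The shape of an edge sequence: for each `0` of `b` the corresponding part is
the number of `1`'s below it; equivalently, the `(k+1)`-st largest part counts the
`1`'s of `b` with at least `k+1` `0`'s beyond them. -/
noncomputable def esShape (b : ℤ → Prop) (k : ℕ) : ℕ :=
  Nat.card {j : ℤ // b j ∧ k + 1 ≤ numZerosAbove b j}

/-- The `j`-th part of the conjugate partition of `f` (`j ≥ 1`). -/
noncomputable def conjCount (f : ℕ → ℕ) (j : ℕ) : ℕ :=
  Nat.card {i : ℕ // j ≤ f i}

/-- The partition `f` has a box of hook length `n`. -/
def HasHook (f : ℕ → ℕ) (n : ℕ) : Prop :=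
  ∃ a j : ℕ, 1 ≤ j ∧ j ≤ f a ∧ (f a - j) + (conjCount f j - (a + 1)) + 1 = n

noncomputable def numOnesAtMost (b : ℤ → Prop) (j : ℤ) : ℕ :=
  Nat.card {i : ℤ // i ≤ j ∧ b i}

lemma numZerosAbove_eq_ncard {b : ℤ → Prop} (j : ℤ) :
    numZerosAbove b j = {i : ℤ | j < i ∧ ¬ b i}.ncard :=
  Nat.card_coe_set_eq _

lemma numOnesAtMost_eq_ncard {b : ℤ → Prop} (j : ℤ) :
    numOnesAtMost b j = {i : ℤ | i ≤ j ∧ b i}.ncard :=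
  Nat.card_coe_set_eq _

namespace IsEdgeSeq

variable {b : ℤ → Prop} (hb : IsEdgeSeq b)
include hb

lemma finite_zerosAbove (j : ℤ) : {i : ℤ | j < i ∧ ¬ b i}.Finite := by
  obtain ⟨N, hN⟩ := hb.1
  exact (Set.finite_Ioo j N).subset fun i ⟨hji, hi⟩ => ⟨hji, not_le.1 fun h => hi (hN i h)⟩

lemma finite_onesAtMost (j : ℤ) : {i : ℤ | i ≤ j ∧ b i}.Finite := by
  obtain ⟨M, hM⟩ := hb.2
  exact (Set.finite_Ioc M j).subset fun i ⟨hij, hi⟩ => ⟨not_le.1 fun h => hM i h hi, hij⟩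

lemma exists_numZerosAbove_eq_zero : ∃ N, ∀ j, N ≤ j → numZerosAbove b j = 0 := by
  obtain ⟨N, hN⟩ := hb.1
  refine ⟨N, fun j hj => ?_⟩
  rw [numZerosAbove_eq_ncard, Set.ncard_eq_zero (hb.finite_zerosAbove j)]
  exact Set.eq_empty_of_forall_notMem fun i ⟨hji, hi⟩ => hi (hN i (by omega))

lemma exists_numOnesAtMost_eq_zero : ∃ M, ∀ j, j ≤ M → numOnesAtMost b j = 0 := by
  obtain ⟨M, hM⟩ := hb.2
  refine ⟨M, fun j hj => ?_⟩
  rw [numOnesAtMost_eq_ncard, Set.ncard_eq_zero (hb.finite_onesAtMost j)]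
  exact Set.eq_empty_of_forall_notMem fun i ⟨hij, hi⟩ => hM i (by omega) hi

open scoped Classical in
lemma numZerosAbove_sub_one (j : ℤ) :
    numZerosAbove b (j - 1) = numZerosAbove b j + if b j then 0 else 1 := by
  rw [numZerosAbove_eq_ncard, numZerosAbove_eq_ncard]
  split_ifs with hj
  · congr 1
    ext i
    simp only [Set.mem_ofPred_eq]
    grind
  · have hins : {i : ℤ | j - 1 < i ∧ ¬ b i} = insert j {i : ℤ | j < i ∧ ¬ b i} := by
      ext i
      simp only [Set.mem_ofPred_eq, Set.mem_insert_iff]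
      grind
    rw [hins, Set.ncard_insert_of_notMem (by simp) (hb.finite_zerosAbove j)]

open scoped Classical in
lemma numOnesAtMost_sub_one (j : ℤ) :
    numOnesAtMost b j = numOnesAtMost b (j - 1) + if b j then 1 else 0 := by
  rw [numOnesAtMost_eq_ncard, numOnesAtMost_eq_ncard]
  split_ifs with hj
  · have hins : {i : ℤ | i ≤ j ∧ b i} = insert j {i : ℤ | i ≤ j - 1 ∧ b i} := by
      ext i
      simp only [Set.mem_ofPred_eq, Set.mem_insert_iff]
      grind
    rw [hins, Set.ncard_insert_of_notMem (by simp) (hb.finite_onesAtMost (j - 1))]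
  · congr 1
    ext i
    simp only [Set.mem_ofPred_eq]
    grind

-- The charge of `b`: raising `j` by one either adds a one at `j + 1` or removes a zero there.
lemma exists_charge : ∃ c : ℤ, ∀ j, (numOnesAtMost b j : ℤ) - numZerosAbove b j = j + c := by
  have hper : Function.Periodic
      (fun j : ℤ => (numOnesAtMost b j : ℤ) - numZerosAbove b j - j) 1 := by
    intro j
    have hones := hb.numOnesAtMost_sub_one (j + 1)
    have hzeros := hb.numZerosAbove_sub_one (j + 1)
    rw [add_sub_cancel_right] at hones hzeros
    dsimp only
    split_ifs at hones hzeros <;> omega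
  refine ⟨(numOnesAtMost b 0 : ℤ) - numZerosAbove b 0, fun j => ?_⟩
  have := hper.int_mul_eq j
  simp only [Int.cast_id, mul_one] at this
  omega

lemma numZerosAbove_antitone : Antitone (numZerosAbove b) :=
  antitone_int_of_succ_le fun j => by
    have := hb.numZerosAbove_sub_one (j + 1)
    rw [add_sub_cancel_right] at this
    split_ifs at this <;> omega

lemma numOnesAtMost_monotone : Monotone (numOnesAtMost b) :=
  monotone_int_of_le_succ fun j => by
    have := hb.numOnesAtMost_sub_one (j + 1)
    rw [add_sub_cancel_right] at this
    split_ifs at this <;> omega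

lemma one_le_numOnesAtMost {q : ℤ} (hq : b q) : 1 ≤ numOnesAtMost b q := by
  have := hb.numOnesAtMost_sub_one q
  rw [if_pos hq] at this
  omega

lemma numZerosAbove_lt_of_lt {p q : ℤ} (hp : ¬ b p) (hqp : q < p) :
    numZerosAbove b p < numZerosAbove b q := by
  have hstep := hb.numZerosAbove_sub_one p
  rw [if_neg hp] at hstep
  have := hb.numZerosAbove_antitone (show q ≤ p - 1 by omega)
  omega

lemma strictAntiOn_numZerosAbove : StrictAntiOn (numZerosAbove b) {p | ¬ b p} :=
  fun _ _ _ hp hqp => hb.numZerosAbove_lt_of_lt hp hqp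

lemma lt_iff_numZerosAbove_lt {p q : ℤ} (hp : ¬ b p) :
    q < p ↔ numZerosAbove b p < numZerosAbove b q :=
  ⟨hb.numZerosAbove_lt_of_lt hp,
    fun hlt => not_le.1 fun hpq => (hb.numZerosAbove_antitone hpq).not_gt hlt⟩

lemma lt_iff_numOnesAtMost_le {p q : ℤ} (hq : b q) (hp : ¬ b p) :
    q < p ↔ numOnesAtMost b q ≤ numOnesAtMost b p := by
  constructor
  · exact fun hqp => hb.numOnesAtMost_monotone hqp.le
  · intro hle
    by_contra hpq
    have hpq : p < q := lt_of_le_of_ne (not_lt.1 hpq) fun h => hp (h ▸ hq)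
    have hstep := hb.numOnesAtMost_sub_one q
    rw [if_pos hq] at hstep
    have := hb.numOnesAtMost_monotone (show p ≤ q - 1 by omega)
    omega

lemma exists_not_and_numZerosAbove_eq (a : ℕ) : ∃ p, ¬ b p ∧ numZerosAbove b p = a := by
  obtain ⟨c, hc⟩ := hb.exists_charge
  obtain ⟨N, hN⟩ := hb.exists_numZerosAbove_eq_zero
  obtain ⟨M, hM⟩ := hb.exists_numOnesAtMost_eq_zero
  obtain ⟨p, hpa, hleast⟩ := Int.exists_least_of_bdd (P := fun j => numZerosAbove b j ≤ a)
    ⟨min M (-a - c), fun j hj => by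
      by_contra hlt
      have := hc j
      have := hM j (by omega)
      omega⟩
    ⟨N, by simp only [hN N le_rfl, zero_le]⟩
  have hprev : a < numZerosAbove b (p - 1) :=
    not_le.1 fun h => by have := hleast _ h; omega
  have hstep := hb.numZerosAbove_sub_one p
  by_cases hp : b p
  · rw [if_pos hp] at hstep
    omega
  · rw [if_neg hp] at hstep
    exact ⟨p, hp, by omega⟩

lemma exists_and_numOnesAtMost_eq {m : ℕ} (hm : 1 ≤ m) : ∃ q, b q ∧ numOnesAtMost b q = m := by
  obtain ⟨c, hc⟩ := hb.exists_charge
  obtain ⟨N, hN⟩ := hb.exists_numZerosAbove_eq_zero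
  obtain ⟨M, hM⟩ := hb.exists_numOnesAtMost_eq_zero
  obtain ⟨q, hqm, hleast⟩ := Int.exists_least_of_bdd (P := fun j => m ≤ numOnesAtMost b j)
    ⟨M, fun j hj => by
      by_contra hlt
      have := hM j (by omega)
      omega⟩
    ⟨max N (m - c), by
      have := hc (max N (m - c))
      have := hN (max N (m - c)) (le_max_left _ _)
      omega⟩
  have hprev : numOnesAtMost b (q - 1) < m :=
    not_le.1 fun h => by have := hleast _ h; omega
  have hstep := hb.numOnesAtMost_sub_one q
  by_cases hq : b q
  · rw [if_pos hq] at hstep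
    exact ⟨q, hq, by omega⟩
  · rw [if_neg hq] at hstep
    omega

lemma esShape_numZerosAbove {p : ℤ} (hp : ¬ b p) :
    esShape b (numZerosAbove b p) = numOnesAtMost b p :=
  Nat.card_congr <| Equiv.subtypeEquivRight fun j => by
    constructor
    · rintro ⟨hj, hlt⟩
      exact ⟨((hb.lt_iff_numZerosAbove_lt hp).2 hlt).le, hj⟩
    · rintro ⟨hjp, hj⟩
      exact ⟨hj, (hb.lt_iff_numZerosAbove_lt hp).1 (lt_of_le_of_ne hjp fun h => hp (h ▸ hj))⟩

lemma conjCount_esShape_numOnesAtMost {q : ℤ} (hq : b q) :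
    conjCount (esShape b) (numOnesAtMost b q) = numZerosAbove b q := by
  symm
  refine Nat.card_eq_of_bijective
    (fun p => ⟨numZerosAbove b p.1, ?_⟩) ⟨fun p p' hpp' => ?_, fun a => ?_⟩
  · rw [hb.esShape_numZerosAbove p.2.2]
    exact (hb.lt_iff_numOnesAtMost_le hq p.2.2).1 p.2.1
  · exact Subtype.ext <|
      hb.strictAntiOn_numZerosAbove.injOn p.2.2 p'.2.2 (congrArg Subtype.val hpp')
  · obtain ⟨p, hp, hpa⟩ := hb.exists_not_and_numZerosAbove_eq a.1
    have hqp : q < p := by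
      rw [hb.lt_iff_numOnesAtMost_le hq hp, ← hb.esShape_numZerosAbove hp, hpa]
      exact a.2
    exact ⟨⟨p, hqp, hp⟩, Subtype.ext hpa⟩

lemma hookLength_eq_sub {p q : ℤ} (hp : ¬ b p) (hqp : q < p) :
    ((numOnesAtMost b p - numOnesAtMost b q) +
      (numZerosAbove b q - (numZerosAbove b p + 1)) + 1 : ℕ) = p - q := by
  obtain ⟨c, hc⟩ := hb.exists_charge
  have := hc p
  have := hc q
  have := hb.numOnesAtMost_monotone hqp.le
  have := hb.numZerosAbove_lt_of_lt hp hqp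
  omega

end IsEdgeSeq

theorem stmt1_general (r : ℕ) (b : ℤ → Prop) (hb : IsEdgeSeq b) :
    HasHook (esShape b) r ↔ ∃ k : ℤ, b k ∧ ¬ b (k + (r : ℤ)) := by
  constructor
  · rintro ⟨a, j, hj, hja, hhook⟩
    obtain ⟨p, hp, rfl⟩ := hb.exists_not_and_numZerosAbove_eq a
    obtain ⟨q, hq, rfl⟩ := hb.exists_and_numOnesAtMost_eq hj
    rw [hb.esShape_numZerosAbove hp] at hja hhook
    rw [hb.conjCount_esShape_numOnesAtMost hq] at hhook
    have hqp : q < p := (hb.lt_iff_numOnesAtMost_le hq hp).2 hja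
    have hlen := hb.hookLength_eq_sub hp hqp
    exact ⟨q, hq, by rwa [show q + r = p by omega]⟩
  · rintro ⟨q, hq, hp⟩
    have hqp : q < q + r := lt_of_le_of_ne (by omega) fun h => hp (h ▸ hq)
    refine ⟨numZerosAbove b (q + r), numOnesAtMost b q, hb.one_le_numOnesAtMost hq, ?_, ?_⟩
    · rw [hb.esShape_numZerosAbove hp]
      exact hb.numOnesAtMost_monotone hqp.le
    · rw [hb.esShape_numZerosAbove hp, hb.conjCount_esShape_numOnesAtMost hq]
      have := hb.hookLength_eq_sub hp hqp
      omega

/-- For an edge sequence `b` with shape `γ = esShape b`, the partition `γ`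
contains a box with hook length exactly `r` iff there is an index `k` with `b k = 1` and
`b (k + r) = 0`. -/
theorem stmt1 (r : ℕ) (hr : 1 ≤ r) (b : ℤ → Prop) (hb : IsEdgeSeq b) :
    HasHook (esShape b) r ↔ ∃ k : ℤ, b k ∧ ¬ b (k + (r : ℤ)) :=
  stmt1_general r b hb
end

section
/- Let α ∈ Q and N_• compatible with α, and let λ^• = (λ^{(0)},...,λ^{(r-1)}) be an r-tuple of partitions with ℓ(λ^{(i)}) ≤ N_i for all i. Then the partition λ = big(α, λ^•) with r-core κ^{-1}(α) and r-quotient λ^• satisfies ℓ(λ) ≤ |N_•|. -/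
/-- A function `ℕ → ℕ` is (the sequence of parts of) a partition. -/
def IsPartitionFun (f : ℕ → ℕ) : Prop :=
  (∀ i j : ℕ, i ≤ j → f j ≤ f i) ∧ ∃ n : ℕ, ∀ i : ℕ, n ≤ i → f i = 0

/-- The number of nonzero parts of a partition. -/
noncomputable def partLen (f : ℕ → ℕ) : ℕ := Nat.card {i : ℕ // f i ≠ 0}

/-- The canonical (total charge zero) edge sequence encoding of a partition `f`. -/
def edgeOf (f : ℕ → ℕ) (i : ℤ) : Prop :=
  ∃ k : ℕ, i = (k : ℤ) - (conjCount f (k + 1) : ℤ)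

/-- The residue-`c` box count of a partition (boxes indexed from `0`). -/
noncomputable def residueCount (r : ℕ) (f : ℕ → ℕ) (c : ZMod r) : ℕ :=
  Nat.card {x : ℕ × ℕ // x.2 < f x.1 ∧ (((x.1 : ℤ) - (x.2 : ℤ) : ℤ) : ZMod r) = c}

/-- The map `κ` of a partition into the `sl_r` root lattice. -/
noncomputable def kappa (r : ℕ) (f : ℕ → ℕ) : ZMod r → ℤ :=
  fun c => (residueCount r f c : ℤ) - (residueCount r f (c + 1) : ℤ)

/-- The `i`-th component of the `r`-quotient of a partition: the shape of the
corresponding runner of its charge-zero edge sequence (runners labelled compatibly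
with `κ`). -/
noncomputable def quotComp (r : ℕ) [NeZero r] (f : ℕ → ℕ) (i : ZMod r) : ℕ → ℕ :=
  fun k => esShape (fun j : ℤ => edgeOf f (r * j + (((-1 - i : ZMod r)).val : ℤ))) k

/-! ### conjCount basics -/

section basics
variable {f : ℕ → ℕ}

lemma conjCount_eq_ncard (f : ℕ → ℕ) (k : ℕ) :
    conjCount f k = {i : ℕ | k ≤ f i}.ncard :=
  Nat.card_coe_set_eq _

lemma conj_set_finite (hf : IsPartitionFun f) {k : ℕ} (hk : 1 ≤ k) :
    {i : ℕ | k ≤ f i}.Finite := by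
  obtain ⟨n, hn⟩ := hf.2
  apply Set.Finite.subset (Set.finite_Iio n)
  intro a ha
  simp only [Set.mem_setOf_eq] at ha
  by_contra h
  rw [Set.mem_Iio, not_lt] at h
  have := hn a (by simpa [Set.mem_Iio] using h)
  omega

lemma lt_conjCount_iff (hf : IsPartitionFun f) {k : ℕ} (hk : 1 ≤ k) (a : ℕ) :
    a < conjCount f k ↔ k ≤ f a := by
  rw [conjCount_eq_ncard]
  constructor
  · intro h
    by_contra hc
    push_neg at hc
    have hsub : {i : ℕ | k ≤ f i} ⊆ Set.Iio a := by
      intro x hx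
      simp only [Set.mem_setOf_eq] at hx
      simp only [Set.mem_Iio]
      by_contra hxa
      push_neg at hxa
      have := hf.1 a x hxa
      omega
    have : {i : ℕ | k ≤ f i}.ncard ≤ (Set.Iio a).ncard := Set.ncard_le_ncard hsub (Set.finite_Iio a)
    rw [show (Set.Iio a) = ↑(Finset.Iio a) by simp, Set.ncard_coe_finset] at this
    simp at this
    omega
  · intro h
    have hsub : ↑(Finset.Iic a) ⊆ {i : ℕ | k ≤ f i} := by
      intro x hx
      simp only [Finset.coe_Iic, Set.mem_Iic] at hx
      exact Set.mem_setOf_eq ▸ le_trans h (hf.1 x a hx)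
    have := Set.ncard_le_ncard hsub (conj_set_finite hf hk)
    rw [Set.ncard_coe_finset] at this
    simp at this
    omega

lemma conjCount_le (hf : IsPartitionFun f) {k k' : ℕ} (hk : 1 ≤ k) (h : k ≤ k') :
    conjCount f k' ≤ conjCount f k := by
  rw [conjCount_eq_ncard, conjCount_eq_ncard]
  exact Set.ncard_le_ncard (fun x hx => le_trans h hx) (conj_set_finite hf hk)

lemma conjCount_eq_zero (hf : IsPartitionFun f) {k : ℕ} (h : f 0 < k) :
    conjCount f k = 0 := by
  rw [conjCount_eq_ncard]
  convert Set.ncard_empty ℕ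
  ext a
  simp only [Set.mem_setOf_eq, Set.mem_empty_iff_false, iff_false]
  have := hf.1 0 a (Nat.zero_le a)
  omega

lemma partLen_eq_conjCount (f : ℕ → ℕ) : partLen f = conjCount f 1 := by
  unfold partLen conjCount
  exact Nat.card_congr (Equiv.subtypeEquivRight (by intro x; omega))

end basics

/-! ### edge sequence basics -/

section edge
variable {f : ℕ → ℕ}

lemma edgeOf_of_le (hf : IsPartitionFun f) {x : ℤ} (h : (f 0 : ℤ) ≤ x) :
    edgeOf f x := by
  have hx0 : 0 ≤ x := le_trans (by positivity) h
  refine ⟨x.toNat, ?_⟩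
  rw [conjCount_eq_zero hf (by omega : f 0 < x.toNat + 1)]
  omega

lemma edgeOf_lb (hf : IsPartitionFun f) {x : ℤ} (h : edgeOf f x) :
    -(conjCount f 1 : ℤ) ≤ x := by
  obtain ⟨k, rfl⟩ := h
  have := conjCount_le hf (le_refl 1) (by omega : 1 ≤ k + 1)
  omega

lemma edgeOf_head (f : ℕ → ℕ) : edgeOf f (-(conjCount f 1 : ℤ)) :=
  ⟨0, by simp⟩

lemma sub_one_isPartitionFun (hf : IsPartitionFun f) :
    IsPartitionFun (fun a => f a - 1) := by
  obtain ⟨n, hn⟩ := hf.2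
  exact ⟨fun i j hij => by have := hf.1 i j hij; dsimp only; omega,
    n, fun i hi => by have := hn i hi; dsimp only; omega⟩

lemma conjCount_sub_one (f : ℕ → ℕ) {k : ℕ} (hk : 1 ≤ k) :
    conjCount (fun a => f a - 1) k = conjCount f (k + 1) := by
  unfold conjCount
  exact Nat.card_congr (Equiv.subtypeEquivRight (by intro x; simp only; omega))

lemma edgeOf_rec (f : ℕ → ℕ) (x : ℤ) :
    edgeOf f x ↔ x = -(conjCount f 1 : ℤ) ∨ edgeOf (fun a => f a - 1) (x - 1) := by
  constructor
  · rintro ⟨k, rfl⟩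
    cases k with
    | zero => left; simp
    | succ k' =>
      right
      exact ⟨k', by rw [conjCount_sub_one f (by omega : 1 ≤ k' + 1)]; push_cast; ring⟩
  · rintro (rfl | ⟨k', hk'⟩)
    · exact edgeOf_head f
    · refine ⟨k' + 1, ?_⟩
      rw [conjCount_sub_one f (by omega : 1 ≤ k' + 1)] at hk'
      push_cast
      omega

lemma edgeOf_rec_not_both (hf : IsPartitionFun f)
    (h : edgeOf (fun a => f a - 1) (-(conjCount f 1 : ℤ) - 1)) : False := by
  have h1 := edgeOf_lb (sub_one_isPartitionFun hf) h
  rw [conjCount_sub_one f le_rfl] at h1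
  have h2 := conjCount_le hf le_rfl (by omega : 1 ≤ 2)
  norm_num at h1
  omega

end edge

/-! ### counting machinery -/

noncomputable def cnt (b : ℤ → Prop) (m : ℤ) : ℕ := {x : ℤ | x < m ∧ b x}.ncard

lemma cnt_finite {b : ℤ → Prop} {lo : ℤ} (hlb : ∀ x, b x → lo ≤ x) (m : ℤ) :
    {x : ℤ | x < m ∧ b x}.Finite := by
  apply Set.Finite.subset (Set.finite_Ico lo m)
  intro x hx
  exact Set.mem_Ico.mpr ⟨hlb x hx.2, hx.1⟩

lemma cnt_succ {b : ℤ → Prop} {lo : ℤ} (hlb : ∀ x, b x → lo ≤ x) {m : ℤ} (hb : b m) :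
    cnt b (m + 1) = cnt b m + 1 := by
  unfold cnt
  have : {x : ℤ | x < m + 1 ∧ b x} = insert m {x : ℤ | x < m ∧ b x} := by
    ext x
    simp only [Set.mem_setOf_eq, Set.mem_insert_iff]
    constructor
    · rintro ⟨h1, h2⟩
      rcases eq_or_lt_of_le (by omega : x ≤ m) with h | h
      · exact Or.inl h
      · exact Or.inr ⟨h, h2⟩
    · rintro (rfl | ⟨h1, h2⟩)
      · exact ⟨by omega, hb⟩
      · exact ⟨by omega, h2⟩
  rw [this, Set.ncard_insert_of_notMem (by simp) (cnt_finite hlb m)]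

lemma charge_indep_aux {b : ℤ → Prop} {lo : ℤ} (hlb : ∀ x, b x → lo ≤ x)
    {m : ℤ} (hm : ∀ x, m ≤ x → b x) :
    ∀ m', m ≤ m' → (m : ℤ) - cnt b m = m' - cnt b m' := by
  intro m'
  refine Int.le_induction (motive := fun n _ => (m:ℤ) - cnt b m = n - cnt b n) ?_ ?_ m'
  · rfl
  · intro n hn ih
    rw [cnt_succ hlb (hm n hn)]
    push_cast
    omega

lemma charge_indep {b : ℤ → Prop} {lo : ℤ} (hlb : ∀ x, b x → lo ≤ x)
    {m m' : ℤ} (hm : ∀ x, m ≤ x → b x) (hm' : ∀ x, m' ≤ x → b x) :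
    (m : ℤ) - cnt b m = m' - cnt b m' := by
  have h1 := charge_indep_aux hlb hm (max m m') (le_max_left _ _)
  have h2 := charge_indep_aux hlb hm' (max m m') (le_max_right _ _)
  omega

/-! ### column residue counts -/

noncomputable def colc (r : ℕ) (c : ZMod r) (l : ℕ) : ℕ :=
  ((Finset.range l).filter (fun a => ((a : ℕ) : ZMod r) = c)).card

lemma colc_succ (r : ℕ) (c : ZMod r) (l : ℕ) :
    colc r c (l + 1) = colc r c l + (if ((l : ℕ) : ZMod r) = c then 1 else 0) := by
  unfold colc
  rw [Finset.range_add_one, Finset.filter_insert]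
  split_ifs with h
  · rw [Finset.card_insert_of_notMem (by simp)]
  · simp

lemma colc_sub (r : ℕ) (c : ZMod r) (l : ℕ) :
    (colc r c l : ℤ) - (colc r (c + 1) l : ℤ)
      = (if ((l : ℕ) : ZMod r) = c + 1 then 1 else 0)
        - (if ((0 : ℕ) : ZMod r) = c + 1 then 1 else 0) := by
  induction l with
  | zero => simp [colc]
  | succ n ih =>
    rw [colc_succ, colc_succ]
    push_cast
    push_cast at ih
    simp only [add_left_inj]
    split_ifs at ih ⊢ <;> omega

/-! ### residueCount recursion -/

lemma residue_set_finite {r : ℕ} (f : ℕ → ℕ) (hf : IsPartitionFun f) (c : ZMod r) :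
    {x : ℕ × ℕ | x.2 < f x.1 ∧ (((x.1 : ℤ) - (x.2 : ℤ) : ℤ) : ZMod r) = c}.Finite := by
  obtain ⟨n, hn⟩ := hf.2
  apply Set.Finite.subset (Set.finite_Iio n |>.prod (Set.finite_Iio (f 0)))
  rintro ⟨a, b⟩ ⟨h1, _⟩
  dsimp only at h1
  constructor
  · simp only [Set.mem_Iio]
    by_contra h
    push_neg at h
    have := hn a h
    omega
  · simp only [Set.mem_Iio]
    have := hf.1 0 a (Nat.zero_le a)
    omega

lemma residueCount_eq_ncard (r : ℕ) (f : ℕ → ℕ) (c : ZMod r) :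
    residueCount r f c
      = {x : ℕ × ℕ | x.2 < f x.1 ∧ (((x.1 : ℤ) - (x.2 : ℤ) : ℤ) : ZMod r) = c}.ncard :=
  Nat.card_coe_set_eq _

lemma residue_rec (r : ℕ) {f : ℕ → ℕ} (hf : IsPartitionFun f) (c : ZMod r) :
    residueCount r f c
      = colc r c (conjCount f 1) + residueCount r (fun a => f a - 1) (c + 1) := by
  classical
  rw [residueCount_eq_ncard, residueCount_eq_ncard]
  set A := {x : ℕ × ℕ | x.2 < f x.1 ∧ (((x.1 : ℤ) - (x.2 : ℤ) : ℤ) : ZMod r) = c} with hA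
  set B := {x : ℕ × ℕ | x.2 < f x.1 - 1 ∧ (((x.1 : ℤ) - (x.2 : ℤ) : ℤ) : ZMod r) = c + 1} with hB
  set A0 := (fun a : ℕ => (a, 0)) '' {a : ℕ | a < conjCount f 1 ∧ ((a : ℕ) : ZMod r) = c} with hA0
  set A1 := (fun x : ℕ × ℕ => (x.1, x.2 + 1)) '' B with hA1
  have hsplit : A = A0 ∪ A1 := by
    ext ⟨a, b⟩
    simp only [hA, hA0, hA1, hB, Set.mem_setOf_eq, Set.mem_union, Set.mem_image, Prod.mk.injEq]
    constructor
    · rintro ⟨h1, h2⟩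
      cases b with
      | zero =>
        left
        refine ⟨a, ⟨?_, ?_⟩, rfl, rfl⟩
        · rw [lt_conjCount_iff hf le_rfl]; omega
        · rw [← h2]; push_cast; ring_nf
      | succ b' =>
        right
        refine ⟨(a, b'), ⟨by dsimp only; omega, ?_⟩, rfl, rfl⟩
        rw [← h2]
        push_cast
        ring
    · rintro (⟨a', ⟨h1, h2⟩, rfl, rfl⟩ | ⟨⟨a', b'⟩, ⟨h1, h2⟩, rfl, rfl⟩)
      · rw [lt_conjCount_iff hf le_rfl] at h1
        refine ⟨by omega, ?_⟩
        rw [← h2]; push_cast; ring_nf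
      · dsimp only at h1 h2 ⊢
        refine ⟨by omega, ?_⟩
        rw [← sub_eq_iff_eq_add] at h2
        rw [← h2]
        push_cast
        ring
  have hBfin : B.Finite := residue_set_finite _ (sub_one_isPartitionFun hf) (c+1)
  have hA0fin : A0.Finite := by
    apply Set.Finite.image
    exact Set.Finite.subset (Set.finite_Iio (conjCount f 1)) (fun x hx => hx.1)
  have hdisj : Disjoint A0 A1 := by
    rw [Set.disjoint_left]
    rintro ⟨a, b⟩ h0 h1
    simp only [hA0, Set.mem_image, Prod.mk.injEq] at h0
    simp only [hA1, Set.mem_image, Prod.mk.injEq] at h1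
    obtain ⟨_, _, _, hb0⟩ := h0
    obtain ⟨_, _, _, hb1⟩ := h1
    omega
  rw [hsplit, Set.ncard_union_eq hdisj hA0fin (hBfin.image _)]
  congr 1
  · rw [hA0, Set.ncard_image_of_injective _ (fun x y h => by simpa using h)]
    unfold colc
    rw [← Set.ncard_coe_finset]
    congr 1
    ext a
    simp
  · rw [hA1, Set.ncard_image_of_injective]
    rintro ⟨x1, x2⟩ ⟨y1, y2⟩ h
    simp only [Prod.mk.injEq] at h ⊢
    omega

lemma kappa_rec (r : ℕ) {f : ℕ → ℕ} (hf : IsPartitionFun f) (c : ZMod r) :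
    kappa r f c = kappa r (fun a => f a - 1) (c + 1)
      + ((colc r c (conjCount f 1) : ℤ) - (colc r (c + 1) (conjCount f 1) : ℤ)) := by
  unfold kappa
  rw [residue_rec r hf c, residue_rec r hf (c + 1)]
  push_cast
  ring

/-! ### runners -/

def runnerB (r : ℕ) [NeZero r] (f : ℕ → ℕ) (i : ZMod r) : ℤ → Prop :=
  fun j : ℤ => edgeOf f (r * j + (((-1 - i : ZMod r)).val : ℤ))

variable {r : ℕ} [NeZero r]

lemma quotComp_eq_runnerB (f : ℕ → ℕ) (i : ZMod r) :
    quotComp r f i = fun k => esShape (runnerB r f i) k := rfl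

lemma hr_pos : (0:ℤ) < (r:ℤ) := by
  exact_mod_cast Nat.pos_of_ne_zero (NeZero.ne r)

lemma runnerB_lb {f : ℕ → ℕ} (hf : IsPartitionFun f) (i : ZMod r) {j : ℤ}
    (h : runnerB r f i j) : -(conjCount f 1 : ℤ) - r ≤ j := by
  have hlb := edgeOf_lb hf h
  have hd : ((((-1 - i : ZMod r)).val : ℤ)) < r := by exact_mod_cast ZMod.val_lt _
  have hd0 : (0:ℤ) ≤ (((-1 - i : ZMod r)).val : ℤ) := by positivity
  rcases le_or_gt 0 j with hj | hj
  · have : (0:ℤ) ≤ (conjCount f 1 : ℤ) := by positivity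
    have := hr_pos (r := r)
    omega
  · have : (r:ℤ) * j ≤ 1 * j :=
      mul_le_mul_of_nonpos_right (by have := hr_pos (r := r); omega) (by omega)
    omega

lemma runnerB_top {f : ℕ → ℕ} (hf : IsPartitionFun f) (i : ZMod r) {j : ℤ}
    (h : (f 0 : ℤ) ≤ j) : runnerB r f i j := by
  have h0 : (0:ℤ) ≤ j := le_trans (by positivity) h
  have : 1 * j ≤ (r:ℤ) * j := mul_le_mul_of_nonneg_right (by have := hr_pos (r := r); omega) h0
  apply edgeOf_of_le hf
  have hd0 : (0:ℤ) ≤ (((-1 - i : ZMod r)).val : ℤ) := by positivity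
  omega

/-! ### the master induction: charge of a runner equals `-κ` -/

lemma natCast_val_cast (u : ZMod r) : ((u.val : ℕ) : ZMod r) = u := by
  simp [ZMod.natCast_val, ZMod.cast_id]

lemma card_subtype_eq_ncard {ι : Type*} (p : ι → Prop) :
    Nat.card {x // p x} = {x | p x}.ncard := Nat.card_coe_set_eq {x | p x}

theorem main_aux : ∀ (n : ℕ) (f : ℕ → ℕ), IsPartitionFun f → f 0 = n →
    ∀ (i : ZMod r) (m : ℤ), (∀ x, m ≤ x → runnerB r f i x) →
    (m : ℤ) - cnt (runnerB r f i) m = -(kappa r f i) := by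
  intro n
  induction n with
  | zero =>
    intro f hf h0 i m hm
    have hf0 : ∀ a, f a = 0 := fun a => by have := hf.1 0 a (Nat.zero_le a); omega
    have hedge : ∀ x : ℤ, edgeOf f x ↔ 0 ≤ x := by
      intro x
      constructor
      · intro h
        have := edgeOf_lb hf h
        rw [conjCount_eq_zero hf (by omega)] at this
        omega
      · intro h
        exact edgeOf_of_le hf (by omega)
    have hrun : ∀ x : ℤ, runnerB r f i x ↔ 0 ≤ x := by
      intro x
      rw [runnerB, hedge]
      have hd : ((((-1 - i : ZMod r)).val : ℤ)) < r := by exact_mod_cast ZMod.val_lt _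
      have hd0 : (0:ℤ) ≤ (((-1 - i : ZMod r)).val : ℤ) := by positivity
      constructor
      · intro h
        by_contra hx
        push_neg at hx
        have : (r:ℤ) * x ≤ (r:ℤ) * (-1) :=
          mul_le_mul_of_nonneg_left (by omega) (by positivity)
        omega
      · intro h
        have : 1 * x ≤ (r:ℤ) * x := mul_le_mul_of_nonneg_right (by have := hr_pos (r := r); omega) h
        omega
    have hm0 : 0 ≤ m := by
      by_contra h
      push_neg at h
      have := (hrun m).mp (hm m le_rfl)
      omega
    have hcnt : cnt (runnerB r f i) m = m.toNat := by
      unfold cnt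
      have : {x : ℤ | x < m ∧ runnerB r f i x} = ↑(Finset.Ico (0:ℤ) m) := by
        ext x
        simp only [Set.mem_setOf_eq, Finset.coe_Ico, Set.mem_Ico, hrun]
        tauto
      rw [this, Set.ncard_coe_finset]
      simp [Int.toNat_of_nonneg hm0]
    have hres : ∀ c : ZMod r, residueCount r f c = 0 := by
      intro c
      rw [residueCount_eq_ncard]
      convert Set.ncard_empty (ℕ × ℕ)
      ext ⟨a, b⟩
      simp [hf0]
    rw [hcnt]
    unfold kappa
    rw [hres, hres]
    omega
  | succ n IH =>
    intro f hf h0 i m hm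
    set f2 : ℕ → ℕ := fun a => f a - 1 with hf2def
    have hf2 : IsPartitionFun f2 := sub_one_isPartitionFun hf
    have hf20 : f2 0 = n := by simp only [hf2def]; omega
    set l := conjCount f 1 with hldef
    have hl1 : 1 ≤ l := by
      have := (lt_conjCount_iff hf le_rfl 0).mpr (by omega)
      omega
    set d : ℕ := ((-1 - i : ZMod r)).val with hddef
    have hd_lt : d < r := ZMod.val_lt _
    have hd_cast : ((d : ℕ) : ZMod r) = -1 - i := natCast_val_cast _
    set b := runnerB r f i with hbdef
    have hb_iff : ∀ x : ℤ, b x ↔ ((r:ℤ) * x + d = -(l:ℤ) ∨ edgeOf f2 ((r:ℤ) * x + d - 1)) := by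
      intro x
      rw [hbdef, runnerB, edgeOf_rec]
    have hlb : ∀ x, b x → -(l:ℤ) - r ≤ x := fun x hx => runnerB_lb hf i hx
    -- move to a large cutoff M
    set M := max m (max 1 ((f 0 : ℤ) + 1)) with hMdef
    have hM1 : (1:ℤ) ≤ M := le_trans (le_max_left _ _) (le_max_right _ _)
    have hMf : (f 0 : ℤ) + 1 ≤ M := le_trans (le_max_right _ _) (le_max_right _ _)
    have hmM : m ≤ M := le_max_left _ _
    have hMtop : ∀ x, M ≤ x → b x := fun x hx => hm x (le_trans hmM hx)
    have hcharge : (m : ℤ) - cnt b m = M - cnt b M := charge_indep hlb hm hMtop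
    rw [hcharge]
    -- the "dvd" indicator sets
    have hiff : ((r:ℤ) ∣ ((l:ℤ) + (d:ℤ))) ↔ ((l:ℕ) : ZMod r) = i + 1 := by
      rw [← ZMod.intCast_zmod_eq_zero_iff_dvd]
      push_cast
      constructor
      · intro h
        have : ((l:ℕ) : ZMod r) = -((d:ℕ) : ZMod r) := by linear_combination h
        rw [this, hd_cast]
        ring
      · intro h
        rw [h, hd_cast]
        ring
    have hzero_iff : ((((0:ℕ)):ZMod r) = i + 1) ↔ d = 0 := by
      push_cast
      constructor
      · intro h
        have h2 : ((d:ℕ) : ZMod r) = 0 := by rw [hd_cast]; linear_combination h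
        rw [ZMod.natCast_eq_zero_iff] at h2
        exact Nat.eq_zero_of_dvd_of_lt h2 hd_lt
      · intro h
        have h2 : ((d:ℕ) : ZMod r) = 0 := by rw [h]; norm_num
        rw [hd_cast] at h2
        linear_combination h2
    -- ncard of the singleton part
    have hsing_card : {x : ℤ | x < M ∧ (r:ℤ) * x + (d:ℤ) = -(l:ℤ)}.ncard
        = if (r:ℤ) ∣ ((l:ℤ) + (d:ℤ)) then 1 else 0 := by
      split_ifs with h
      · obtain ⟨q, hq⟩ := h
        have hval : {x : ℤ | x < M ∧ (r:ℤ) * x + (d:ℤ) = -(l:ℤ)} = {-q} := by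
          ext x
          simp only [Set.mem_setOf_eq, Set.mem_singleton_iff]
          constructor
          · rintro ⟨_, hx⟩
            have h1 : (r:ℤ) * x = (r:ℤ) * (-q) := by
              rw [mul_neg, ← hq]; omega
            exact mul_left_cancel₀ (by have := hr_pos (r := r); omega) h1
          · rintro rfl
            have hd0' : (0:ℤ) ≤ (d:ℤ) := by positivity
            have hqpos : 0 < q := by
              by_contra hq0
              push_neg at hq0
              have : (r:ℤ) * q ≤ (r:ℤ) * 0 :=
                mul_le_mul_of_nonneg_left hq0 (by positivity)
              omega
            have hrq : (r:ℤ) * (-q) = -((r:ℤ) * q) := by ring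
            exact ⟨by omega, by omega⟩
        rw [hval, Set.ncard_singleton]
      · convert Set.ncard_empty ℤ
        ext x
        simp only [Set.mem_setOf_eq, Set.mem_empty_iff_false, iff_false, not_and]
        intro _ hx
        exact h ⟨-x, by rw [mul_neg]; omega⟩
    -- kappa recursion
    have hk : kappa r f i = kappa r f2 (i + 1)
        + ((colc r i l : ℤ) - (colc r (i + 1) l : ℤ)) := kappa_rec r hf i
    have hcol := colc_sub r i l
    rcases Nat.eq_zero_or_pos d with hd0 | hd1
    · -- Case B : d = 0, i = -1
      have hdz : (d : ℤ) = 0 := by exact_mod_cast hd0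
      have h00 : (-1 : ZMod r) - i = 0 := by rw [← hd_cast, hd0]; norm_num
      have hd'c : (-1 - (i + 1) : ZMod r) = ((r - 1 : ℕ) : ZMod r) := by
        rw [Nat.cast_sub (by omega : 1 ≤ r), ZMod.natCast_self]
        linear_combination h00
      have hd' : ((-1 - (i + 1) : ZMod r)).val = r - 1 := by
        rw [hd'c, ZMod.val_cast_of_lt (by omega)]
      set b2 := runnerB r f2 (i + 1) with hb2def
      have harg : (((r - 1 : ℕ) : ℤ)) = (r:ℤ) - 1 := by omega
      have hb2_iff : ∀ y : ℤ, b2 y ↔ edgeOf f2 ((r:ℤ) * y + ((r:ℤ) - 1)) := by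
        intro y
        rw [hb2def, runnerB, hd', harg]
      have hxarg : ∀ x : ℤ, (r:ℤ) * x + (d:ℤ) - 1 = (r:ℤ) * (x - 1) + ((r:ℤ) - 1) := by
        intro x; rw [hdz]; ring
      have hb2lb : ∀ x, b2 x → -(conjCount f2 1:ℤ) - r ≤ x := fun x hx => runnerB_lb hf2 _ hx
      have hb2top : ∀ x, M - 1 ≤ x → b2 x :=
        fun x hx => runnerB_top hf2 _ (by simp only [hf2def]; omega)
      have hset : {x : ℤ | x < M ∧ b x}
          = ((fun y : ℤ => y + 1) '' {y : ℤ | y < M - 1 ∧ b2 y})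
            ∪ {x : ℤ | x < M ∧ (r:ℤ) * x + d = -(l:ℤ)} := by
        ext x
        simp only [Set.mem_setOf_eq, Set.mem_union, Set.mem_image]
        rw [hb_iff]
        constructor
        · rintro ⟨hxM, h | h⟩
          · exact Or.inr ⟨hxM, h⟩
          · left
            refine ⟨x - 1, ⟨by omega, ?_⟩, by ring⟩
            rw [hb2_iff, ← hxarg x]
            exact h
        · rintro (⟨y, ⟨hy, hb2y⟩, rfl⟩ | ⟨hxM, h⟩)
          · refine ⟨by omega, Or.inr ?_⟩
            rw [hb2_iff] at hb2y
            rw [hxarg (y + 1), show y + 1 - 1 = y from by ring]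
            exact hb2y
          · exact ⟨hxM, Or.inl h⟩
      have hE2fin : {y : ℤ | y < M - 1 ∧ b2 y}.Finite := cnt_finite hb2lb (M - 1)
      have hSfin : {x : ℤ | x < M ∧ (r:ℤ) * x + (d:ℤ) = -(l:ℤ)}.Finite := by
        apply Set.Finite.subset (Set.finite_Icc (-(l:ℤ) - r) M)
        rintro x ⟨hxM, hx⟩
        have : b x := (hb_iff x).mpr (Or.inl hx)
        exact Set.mem_Icc.mpr ⟨hlb x this, by omega⟩
      have hdisj : Disjoint ((fun y : ℤ => y + 1) '' {y : ℤ | y < M - 1 ∧ b2 y})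
          {x : ℤ | x < M ∧ (r:ℤ) * x + d = -(l:ℤ)} := by
        rw [Set.disjoint_left]
        rintro x ⟨y, ⟨hy, hb2y⟩, rfl⟩ ⟨_, hx⟩
        dsimp only at hx
        rw [hb2_iff] at hb2y
        have harg2 : (r:ℤ) * y + ((r:ℤ) - 1) = -(l:ℤ) - 1 := by
          rw [show (r:ℤ) * y + ((r:ℤ) - 1) = (r:ℤ) * (y+1) + (d:ℤ) - 1 from by rw [hdz]; ring]
          omega
        rw [harg2] at hb2y
        exact edgeOf_rec_not_both hf hb2y
      have hcnt2 : cnt b M = cnt b2 (M - 1)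
          + (if (r:ℤ) ∣ ((l:ℤ) + (d:ℤ)) then 1 else 0) := by
        unfold cnt
        rw [hset, Set.ncard_union_eq hdisj (hE2fin.image _) hSfin,
          Set.ncard_image_of_injective _ (fun u v h => by omega), hsing_card]
      have hIH : (M - 1 : ℤ) - cnt b2 (M - 1) = -(kappa r f2 (i + 1)) :=
        IH f2 hf2 hf20 (i + 1) (M - 1) hb2top
      have hz : (((0:ℕ)):ZMod r) = i + 1 := hzero_iff.mpr hd0
      rw [hcnt2, hk, hcol, if_pos hz]
      by_cases hP : ((l:ℕ) : ZMod r) = i + 1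
      · rw [if_pos hP, if_pos (hiff.mpr hP)]
        push_cast
        omega
      · rw [if_neg hP, if_neg (fun hc => hP (hiff.mp hc))]
        push_cast
        omega
    · -- Case A : 1 ≤ d
      have hd'c : (-1 - (i + 1) : ZMod r) = ((d - 1 : ℕ) : ZMod r) := by
        rw [Nat.cast_sub (by omega : 1 ≤ d), hd_cast]
        ring
      have hd' : ((-1 - (i + 1) : ZMod r)).val = d - 1 := by
        rw [hd'c, ZMod.val_cast_of_lt (by omega)]
      set b2 := runnerB r f2 (i + 1) with hb2def
      have harg : (((d - 1 : ℕ) : ℤ)) = (d:ℤ) - 1 := by omega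
      have hb2_iff : ∀ y : ℤ, b2 y ↔ edgeOf f2 ((r:ℤ) * y + ((d:ℤ) - 1)) := by
        intro y
        rw [hb2def, runnerB, hd', harg]
      have hb2lb : ∀ x, b2 x → -(conjCount f2 1:ℤ) - r ≤ x := fun x hx => runnerB_lb hf2 _ hx
      have hb2top : ∀ x, M ≤ x → b2 x :=
        fun x hx => runnerB_top hf2 _ (by simp only [hf2def]; omega)
      have hset : {x : ℤ | x < M ∧ b x}
          = {y : ℤ | y < M ∧ b2 y} ∪ {x : ℤ | x < M ∧ (r:ℤ) * x + d = -(l:ℤ)} := by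
        ext x
        simp only [Set.mem_setOf_eq, Set.mem_union]
        rw [hb_iff, hb2_iff, show (r:ℤ) * x + ((d:ℤ) - 1) = (r:ℤ) * x + (d:ℤ) - 1 from by ring]
        tauto
      have hE2fin : {y : ℤ | y < M ∧ b2 y}.Finite := cnt_finite hb2lb M
      have hSfin : {x : ℤ | x < M ∧ (r:ℤ) * x + (d:ℤ) = -(l:ℤ)}.Finite := by
        apply Set.Finite.subset (Set.finite_Icc (-(l:ℤ) - r) M)
        rintro x ⟨hxM, hx⟩
        have : b x := (hb_iff x).mpr (Or.inl hx)
        exact Set.mem_Icc.mpr ⟨hlb x this, by omega⟩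
      have hdisj : Disjoint {y : ℤ | y < M ∧ b2 y}
          {x : ℤ | x < M ∧ (r:ℤ) * x + d = -(l:ℤ)} := by
        rw [Set.disjoint_left]
        rintro x ⟨hy, hb2y⟩ ⟨_, hx⟩
        rw [hb2_iff] at hb2y
        rw [show (r:ℤ) * x + ((d:ℤ) - 1) = -(l:ℤ) - 1 from by omega] at hb2y
        exact edgeOf_rec_not_both hf hb2y
      have hcnt2 : cnt b M = cnt b2 M
          + (if (r:ℤ) ∣ ((l:ℤ) + (d:ℤ)) then 1 else 0) := by
        unfold cnt
        rw [hset, Set.ncard_union_eq hdisj hE2fin hSfin, hsing_card]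
      have hIH : (M : ℤ) - cnt b2 M = -(kappa r f2 (i + 1)) :=
        IH f2 hf2 hf20 (i + 1) M hb2top
      have hz : ¬ ((((0:ℕ)):ZMod r) = i + 1) := by
        rw [hzero_iff]; omega
      rw [hcnt2, hk, hcol, if_neg hz]
      by_cases hP : ((l:ℕ) : ZMod r) = i + 1
      · rw [if_pos hP, if_pos (hiff.mpr hP)]
        push_cast
        omega
      · rw [if_neg hP, if_neg (fun hc => hP (hiff.mp hc))]
        push_cast
        omega

theorem main_charge {f : ℕ → ℕ} (hf : IsPartitionFun f) (i : ZMod r) (m : ℤ)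
    (hm : ∀ x, m ≤ x → runnerB r f i x) :
    (m : ℤ) - cnt (runnerB r f i) m = -(kappa r f i) :=
  main_aux (f 0) f hf rfl i m hm

lemma kappa_sum_zero (f : ℕ → ℕ) : ∑ c : ZMod r, kappa r f c = 0 := by
  unfold kappa
  rw [Finset.sum_sub_distrib]
  have : ∑ c : ZMod r, (residueCount r f (c + 1) : ℤ)
      = ∑ c : ZMod r, (residueCount r f c : ℤ) :=
    Fintype.sum_equiv (Equiv.addRight 1) _ _ (fun c => rfl)
  rw [this]
  ring


/-- Let `α ∈ Q` and `N` compatible with `α`, and let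
`λ^• = (λ^{(0)}, …, λ^{(r-1)})` be an `r`-tuple of partitions with `ℓ(λ^{(i)}) ≤ N i`
for all `i`.  Then the partition `λ = big(α, λ^•)` with `r`-core `κ⁻¹(α)` and
`r`-quotient `λ^•` satisfies `ℓ(λ) ≤ |N|`.  (Here `λ` is any partition whose `κ`-value
is `α` and whose `r`-quotient is `λ^•`.) -/
theorem stmt9 (r : ℕ) [NeZero r] (α : ZMod r → ℤ) (N : ZMod r → ℕ)
    (f : ℕ → ℕ) (lamq : ZMod r → ℕ → ℕ)
    (hf : IsPartitionFun f)
    (hα : kappa r f = α)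
    (hcompat : ∀ i : ZMod r, (N i : ℤ) - (N (i - 1) : ℤ) = α (i - 1) - α i)
    (hquot : ∀ i : ZMod r, quotComp r f i = lamq i)
    (hq : ∀ i : ZMod r, IsPartitionFun (lamq i))
    (hlen : ∀ i : ZMod r, partLen (lamq i) ≤ N i) :
    partLen f ≤ ∑ i : ZMod r, N i := by
  classical
  rw [partLen_eq_conjCount]
  set l := conjCount f 1 with hldef
  rcases Nat.eq_zero_or_pos l with hl0 | hl1
  · omega
  set v : ℤ := -(l:ℤ) with hvdef
  set i : ZMod r := -1 - ((v : ℤ) : ZMod r) with hidef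
  have hdi : (-1 - i : ZMod r) = ((v:ℤ) : ZMod r) := by rw [hidef]; ring
  set d : ℕ := ((-1 - i : ZMod r)).val with hddef
  have hd_cast : ((d : ℕ) : ZMod r) = ((v:ℤ) : ZMod r) := by
    rw [hddef, natCast_val_cast, hdi]
  have hdvd : (r:ℤ) ∣ (v - (d:ℤ)) := by
    rw [← ZMod.intCast_zmod_eq_zero_iff_dvd]
    push_cast
    rw [hd_cast]
    ring
  obtain ⟨j, hj⟩ := hdvd
  have hv : (r:ℤ) * j + (d:ℤ) = v := by omega
  set b := runnerB r f i with hbdef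
  have hbj : b j := by
    rw [hbdef, runnerB]
    rw [show ((r:ℤ) * j + (((-1 - i : ZMod r)).val : ℤ)) = v from hv]
    exact edgeOf_head f
  have hlb : ∀ x, b x → -(l:ℤ) - r ≤ x := fun x hx => runnerB_lb hf i hx
  set Z : ℕ := numZerosAbove b j with hZdef
  obtain ⟨M, hMf0, hMj⟩ : ∃ M : ℤ, (f 0 : ℤ) ≤ M ∧ j < M :=
    ⟨max ((f 0 : ℤ)) (j + 1), le_max_left _ _,
      lt_of_lt_of_le (lt_add_one j) (le_max_right _ _)⟩
  have hMtop : ∀ x, M ≤ x → b x := fun x hx => runnerB_top hf i (le_trans hMf0 hx)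
  have hZset : Z = {x : ℤ | j < x ∧ ¬ b x}.ncard := by
    rw [hZdef, numZerosAbove]
    exact Nat.card_coe_set_eq _
  have hZfin : {x : ℤ | j < x ∧ ¬ b x}.Finite := by
    apply Set.Finite.subset (Set.finite_Ioo j M)
    rintro x ⟨hx1, hx2⟩
    refine Set.mem_Ioo.mpr ⟨hx1, ?_⟩
    by_contra hc
    push_neg at hc
    exact hx2 (hMtop x hc)
  -- Step 1 : Z ≤ N i
  have hZN : Z ≤ N i := by
    have h1 : ∀ k : ℕ, k < Z → lamq i k ≠ 0 := by
      intro k hk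
      rw [← hquot i, quotComp_eq_runnerB]
      have hfin : {x : ℤ | b x ∧ k + 1 ≤ numZerosAbove b x}.Finite := by
        apply Set.Finite.subset (Set.finite_Ico (-(l:ℤ) - r) M)
        rintro x ⟨hbx, hzx⟩
        refine Set.mem_Ico.mpr ⟨hlb x hbx, ?_⟩
        have hne : {y : ℤ | x < y ∧ ¬ b y}.Nonempty := by
          by_contra h
          rw [Set.not_nonempty_iff_eq_empty] at h
          have : numZerosAbove b x = 0 := by
            rw [numZerosAbove, card_subtype_eq_ncard, h, Set.ncard_empty]
          omega
        obtain ⟨y, hy1, hy2⟩ := hne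
        have : y < M := by
          by_contra hc
          push_neg at hc
          exact hy2 (hMtop y hc)
        omega
      have hkey : esShape b k = {x : ℤ | b x ∧ k + 1 ≤ numZerosAbove b x}.ncard := by
        rw [esShape]
        exact Nat.card_coe_set_eq _
      have hpos : 0 < esShape b k := by
        rw [hkey]
        exact (Set.ncard_pos hfin).mpr ⟨j, ⟨hbj, by omega⟩⟩
      intro hzero
      have hz2 : esShape b k = 0 := hzero
      omega
    have h3 : {k : ℕ | lamq i k ≠ 0}.Finite := by
      obtain ⟨n0, hn0⟩ := (hq i).2
      apply Set.Finite.subset (Set.finite_Iio n0)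
      intro k hk
      simp only [Set.mem_setOf_eq] at hk
      by_contra hc
      rw [Set.mem_Iio, not_lt] at hc
      exact hk (hn0 k (by simpa using hc))
    have h4 : Z ≤ partLen (lamq i) := by
      have h2 : {k : ℕ | k < Z} ⊆ {k : ℕ | lamq i k ≠ 0} := fun k hk => h1 k hk
      have := Set.ncard_le_ncard h2 h3
      rw [show {k : ℕ | k < Z} = ↑(Finset.range Z) from by ext; simp,
        Set.ncard_coe_finset, Finset.card_range] at this
      rw [partLen, card_subtype_eq_ncard]
      exact this
    exact le_trans h4 (hlen i)
  -- Step 2 : the charge bound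
  have hch : (M:ℤ) - cnt b M = -(α i) := by
    rw [← hα]
    exact main_charge hf i M hMtop
  have hcntM : (M:ℤ) - j - Z ≤ cnt b M := by
    have hsplit := Finset.card_filter_add_card_filter_not
      (s := Finset.Ico j M) (p := fun x => b x)
    have hcard : (Finset.Ico j M).card = (M - j).toNat := Int.card_Ico j M
    have h5 : ((Finset.Ico j M).filter (fun x => b x)).card ≤ cnt b M := by
      rw [← Set.ncard_coe_finset]
      apply Set.ncard_le_ncard ?_ (cnt_finite hlb M)
      intro x hx
      simp only [Finset.coe_filter, Finset.mem_Ico, Set.mem_setOf_eq] at hx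
      exact ⟨hx.1.2, hx.2⟩
    have h6 : ((Finset.Ico j M).filter (fun x => ¬ b x)).card ≤ Z := by
      rw [hZset, ← Set.ncard_coe_finset]
      apply Set.ncard_le_ncard ?_ hZfin
      intro x hx
      simp only [Finset.coe_filter, Finset.mem_Ico, Set.mem_setOf_eq] at hx
      refine ⟨?_, hx.2⟩
      rcases eq_or_lt_of_le hx.1.1 with rfl | h
      · exact absurd hbj hx.2
      · exact h
    omega
  have hjZ : -(α i) ≤ j + (Z:ℤ) := by omega
  -- compatibility
  have hstep : ∀ c : ZMod r, (N c : ℤ) + α c = (N (c-1) : ℤ) + α (c-1) := by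
    intro c
    have := hcompat c
    omega
  have hconst : ∀ c : ZMod r, (N c : ℤ) + α c = (N i : ℤ) + α i := by
    have hiter : ∀ k : ℕ, (N (i - (k:ℕ)) : ℤ) + α (i - (k:ℕ)) = (N i : ℤ) + α i := by
      intro k
      induction k with
      | zero => simp
      | succ t ih =>
        have := hstep (i - (t:ℕ))
        rw [show (i - ((t+1 : ℕ) : ZMod r) : ZMod r) = (i - (t:ℕ)) - 1 from by push_cast; ring]
        omega
    intro c
    have hc : c = i - (((i - c : ZMod r)).val : ℕ) := by rw [natCast_val_cast]; ring
    rw [hc]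
    exact hiter _
  have hsum0 : ∑ c : ZMod r, α c = 0 := by
    rw [← hα]
    exact kappa_sum_zero f
  have hsumN : ((∑ c : ZMod r, N c : ℕ) : ℤ) = r * ((N i : ℤ) + α i) := by
    push_cast
    have : ∑ c : ZMod r, ((N c : ℤ)) = ∑ c : ZMod r, (((N i : ℤ) + α i) - α c) :=
      Finset.sum_congr rfl (fun c _ => by have := hconst c; omega)
    rw [this, Finset.sum_sub_distrib, hsum0, Finset.sum_const, sub_zero]
    rw [Finset.card_univ, ZMod.card]
    push_cast
    ring
  -- finish
  have hZi : (Z:ℤ) ≤ (N i : ℤ) := by exact_mod_cast hZN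
  have hjge : -(α i) - (N i : ℤ) ≤ j := by omega
  have hmul : (r:ℤ) * (-(α i) - (N i:ℤ)) ≤ (r:ℤ) * j :=
    mul_le_mul_of_nonneg_left hjge (by positivity)
  have hd0 : (0:ℤ) ≤ (d:ℤ) := by positivity
  have hfin : -(((∑ c : ZMod r, N c : ℕ)) : ℤ) ≤ -(l:ℤ) := by
    have hr2 : (r:ℤ) * (-(α i) - (N i:ℤ)) = -((r:ℤ) * ((N i:ℤ) + α i)) := by ring
    omega
  omega
end
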